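/- arXiv:1504.06316 — 2 statements merged into one kernel-verified Lean document; each statement's English description precedes it below -/
import Mathlib

section
/- Let F ≥ 1 and j ≥ 1 with j ≤ log₂ F, and suppose F_j ≤ 2F and ρ_j = 2^{j−1}·⌈F_j/F⌉. Then F_j ≤ F·√(2^{2−j}·ρ_j). -/
lemma le_sqrt_two_mul_ceil {x : ℝ} (hx : x ≤ 2) : x ≤ √(2 * ⌈x⌉) := by
  rcases le_or_gt x 0 with hx0 | hx0
  · exact hx0.trans (Real.sqrt_nonneg _)
  · apply Real.le_sqrt_of_sq_le
    nlinarith [Int.le_ceil x]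

lemma two_zpow_two_sub_mul_two_pow_pred {j : ℕ} (hj : 1 ≤ j) :
    (2:ℝ) ^ ((2:ℤ) - j) * 2 ^ (j - 1) = 2 := by
  rw [← zpow_natCast, Nat.cast_sub hj, ← zpow_add₀ two_ne_zero]
  norm_num

theorem fingerprint_size_bound_general (F Fj ρj : ℝ) (j : ℕ)
    (hF : 1 ≤ F) (hj : 1 ≤ j)
    (hFj : Fj ≤ 2 * F)
    (hρj : ρj = 2 ^ (j - 1) * (⌈Fj / F⌉ : ℝ)) :
    Fj ≤ F * Real.sqrt ((2:ℝ) ^ ((2:ℤ) - j) * ρj) := by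
  have hFpos : 0 < F := one_pos.trans_le hF
  rw [hρj, ← mul_assoc, two_zpow_two_sub_mul_two_pow_pred hj]
  calc Fj = F * (Fj / F) := by field_simp
    _ ≤ F * √(2 * ⌈Fj / F⌉) := by
      gcongr
      exact le_sqrt_two_mul_ceil ((div_le_iff₀ hFpos).2 hFj)

theorem fingerprint_size_bound (F Fj ρj : ℝ) (j : ℕ)
    (hF : 1 ≤ F) (hj : 1 ≤ j) (hjF : (j : ℝ) ≤ Real.logb 2 F)
    (hFjpos : 0 < Fj) (hFj : Fj ≤ 2 * F)
    (hρj : ρj = 2 ^ (j - 1) * (⌈Fj / F⌉ : ℝ)) :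
    Fj ≤ F * Real.sqrt ((2:ℝ) ^ ((2:ℤ) - j) * ρj) :=
  fingerprint_size_bound_general F Fj ρj j hF hj hFj hρj
end

section
/- Let L, F, T_j, N₁, ρ_j, k be positive reals with k ≤ N_j = 2^{j}·N₁/2, N₁ = 8L/F (up to ceiling), ρ_j ≥ 1, and k·ρ_j/2 ≤ T_j. If F_j ≤ F·√(2^{2−j}ρ_j) and N_j·F_j ≤ 2^j·N₁·F terms hold, then k·F_j ≤ 2·√(8·L·T_j·F). -/
/-!
Squaring turns `k * F * √(2^(2-j) ρ)` into `(k ρ) * k * F² * 2^(2-j)`. The first factor `k ρ` is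
at most twice the adversary's budget `T`, the second factor `k` is at most `N_j = 2^j N₁ / 2`,
so the factors `2^(2-j)` and `2^j` cancel, and `N₁ F = 8 L` leaves `4 * (8 L T F)`.
-/

lemma two_zpow_two_sub_mul_two_pow (j : ℕ) : (2 : ℝ) ^ ((2 : ℤ) - j) * 2 ^ j = 4 := by
  rw [← zpow_natCast, ← zpow_add₀ two_ne_zero, sub_add_cancel]
  norm_num

lemma sq_mul_zpow_le_of_budget {L F T N₁ ρ k : ℝ} {j : ℕ} (hF : 0 < F) (hk : 0 ≤ k)
    (hρ : 0 ≤ ρ) (hkN : k ≤ 2 ^ j * N₁ / 2) (hN₁ : N₁ = 8 * L / F) (hT : k * ρ / 2 ≤ T) :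
    (k * F) ^ 2 * ((2 : ℝ) ^ ((2 : ℤ) - j) * ρ) ≤ 2 ^ 2 * (8 * L * T * F) := by
  have hN₁F : N₁ * F = 8 * L := by rw [hN₁]; field_simp
  have hkρ : k * ρ ≤ 2 * T := by linarith
  calc (k * F) ^ 2 * ((2 : ℝ) ^ ((2 : ℤ) - j) * ρ)
      = (k * ρ * (F * 2 ^ ((2 : ℤ) - j))) * (k * F) := by ring
    _ ≤ (2 * T * (F * 2 ^ ((2 : ℤ) - j))) * (2 ^ j * N₁ / 2 * F) := by
      have hT₀ : 0 ≤ T := le_trans (by positivity) hT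
      gcongr
    _ = 2 ^ 2 * (8 * L * T * F) := by
      rw [← hN₁F]
      linear_combination (T * F * N₁ * F) * two_zpow_two_sub_mul_two_pow j

theorem corrupted_rounds_cost_general (L F Tj N₁ ρj k Fj : ℝ) (j : ℕ)
    (hF : 0 < F)
    (hρpos : 0 < ρj) (hk : 0 < k)
    (hkN : k ≤ 2 ^ j * N₁ / 2) (hN₁ : N₁ = 8 * L / F)
    (hT : k * ρj / 2 ≤ Tj)
    (hFj : Fj ≤ F * Real.sqrt ((2:ℝ) ^ ((2:ℤ) - j) * ρj)) :
    k * Fj ≤ 2 * Real.sqrt (8 * L * Tj * F) := by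
  calc k * Fj ≤ k * (F * Real.sqrt ((2 : ℝ) ^ ((2 : ℤ) - j) * ρj)) :=
        mul_le_mul_of_nonneg_left hFj hk.le
    _ = Real.sqrt ((k * F) ^ 2 * ((2 : ℝ) ^ ((2 : ℤ) - j) * ρj)) := by
        rw [Real.sqrt_mul (sq_nonneg _), Real.sqrt_sq (by positivity), mul_assoc]
    _ ≤ Real.sqrt (2 ^ 2 * (8 * L * Tj * F)) :=
        Real.sqrt_le_sqrt (sq_mul_zpow_le_of_budget hF hk.le hρpos.le hkN hN₁ hT)
    _ = 2 * Real.sqrt (8 * L * Tj * F) := by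
        rw [Real.sqrt_mul (by positivity), Real.sqrt_sq zero_le_two]

theorem corrupted_rounds_cost (L F Tj N₁ ρj k Fj : ℝ) (j : ℕ)
    (hL : 0 < L) (hF : 0 < F) (hTj : 0 < Tj) (hN₁pos : 0 < N₁)
    (hρpos : 0 < ρj) (hk : 0 < k)
    (hkN : k ≤ 2 ^ j * N₁ / 2) (hN₁ : N₁ = 8 * L / F) (hρ : 1 ≤ ρj)
    (hT : k * ρj / 2 ≤ Tj)
    (hFj : Fj ≤ F * Real.sqrt ((2:ℝ) ^ ((2:ℤ) - j) * ρj))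
    (hNF : (2 ^ j * N₁ / 2) * Fj ≤ 2 ^ j * N₁ * F) :
    k * Fj ≤ 2 * Real.sqrt (8 * L * Tj * F) :=
  corrupted_rounds_cost_general L F Tj N₁ ρj k Fj j hF hρpos hk hkN hN₁ hT hFj
end
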